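/- Let l/k be a finite extension of fields. Then l is a simple extension of k, i.e., there exists x ∈ l such that the smallest subfield of l containing k and x is l itself, if and only if the l-vector space Ω¹_{l/k} of Kähler differentials of l over k has dimension at most 1 over l. -/

import Mathlib

/-!
If `l = k⟮x⟯` then `Ω[l⁄k]` is generated by `dx`. Conversely, let `S` be the separable closure
of `k` in `l`. Since `Ω[l⁄k] → Ω[l⁄S]` is onto, some `dy` spans `Ω[l⁄S]`; then `Ω[l⁄S⟮y⟯] = 0`,
so `l/S⟮y⟯` is separable as well as purely inseparable, i.e. `l = S⟮y⟯ = k⟮x, y⟯` with `x` a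
primitive element of `S/k`. Finally `y ^ q ^ n ∈ k⟮x⟯`, `q` the exponential characteristic.
As `k⟮x⟯/k` has finitely many intermediate fields, for infinite `k` two of the fields
`k⟮(y + c • x) ^ q ^ n⟯ ⊆ k⟮x⟯` coincide; this puts `x ^ q ^ n`, hence the separable `x`,
into `k⟮y + c • x⟯`.
-/

open IntermediateField KaehlerDifferential

theorem exists_span_singleton_eq_top_of_rank_le_one {K V : Type*} [DivisionRing K]
    [AddCommGroup V] [Module K V] {s : Set V} (hs : Submodule.span K s = ⊤) (hne : s.Nonempty)
    (hV : Module.rank K V ≤ 1) : ∃ v ∈ s, Submodule.span K {v} = ⊤ := by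
  obtain ⟨b, hbs, hb, hind⟩ := exists_linearIndependent K s
  have hcard : Cardinal.mk b ≤ 1 := hind.cardinal_le_rank.trans hV
  have hsub : b.Subsingleton :=
    (Set.subsingleton_coe b).mp (Cardinal.le_one_iff_subsingleton.mp hcard)
  rcases hsub.eq_empty_or_singleton with rfl | ⟨v, rfl⟩
  · obtain ⟨v, hv⟩ := hne
    refine ⟨v, hv, top_le_iff.mp ?_⟩
    rw [← hs, ← hb, Submodule.span_empty]
    exact bot_le
  · exact ⟨v, hbs rfl, hb.trans hs⟩

theorem KaehlerDifferential.span_D_eq_top_of_adjoin_singleton_eq_top {R S : Type*} [CommRing R]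
    [CommRing S] [Algebra R S] {x : S} (hx : Algebra.adjoin R {x} = ⊤) :
    Submodule.span S {D R S x} = ⊤ := by
  rw [eq_top_iff, ← span_range_derivation, Submodule.span_le]
  rintro _ ⟨a, rfl⟩
  obtain ⟨p, rfl⟩ : a ∈ Set.range (Polynomial.aeval (R := R) x) := by
    rw [← AlgHom.coe_range, ← Algebra.adjoin_singleton_eq_range_aeval, hx]; trivial
  rw [Derivation.map_aeval]
  exact Submodule.smul_mem _ _ (Submodule.mem_span_singleton_self _)

theorem KaehlerDifferential.subsingleton_of_span_D_eq_top {K L : Type*} [Field K] [Field L]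
    [Algebra K L] {y : L} (hy : Submodule.span L {D K L y} = ⊤) :
    Subsingleton Ω[L⁄K⟮y⟯] := by
  have hDy : map K K⟮y⟯ L L (D K L y) = 0 := by
    rw [map_D]
    exact (D K⟮y⟯ L).map_algebraMap (AdjoinSimple.gen K y)
  refine subsingleton_of_forall_eq 0 fun ω => ?_
  obtain ⟨ξ, rfl⟩ := map_surjective K K⟮y⟯ L ω
  obtain ⟨c, rfl⟩ := Submodule.mem_span_singleton.mp (hy ▸ Submodule.mem_top : ξ ∈ _)
  rw [map_smul, hDy, smul_zero]

theorem IntermediateField.mem_of_isSeparable_of_pow_mem {F E : Type*} [Field F] [Field E]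
    [Algebra F E] (q n : ℕ) [ExpChar F q] (K : IntermediateField F E) {x : E}
    (hx : IsSeparable F x) (hxK : x ^ q ^ n ∈ K) : x ∈ K := by
  have hbot : K⟮x⟯ = ⊥ := by
    rw [adjoin_simple_eq_adjoin_pow_expChar_pow_of_isSeparable K E (hx.tower_top K) q n,
      adjoin_simple_eq_bot_iff, mem_bot]
    exact ⟨⟨_, hxK⟩, rfl⟩
  obtain ⟨z, hz⟩ := mem_bot.mp (hbot ▸ mem_adjoin_simple_self K x)
  exact hz ▸ z.2

theorem IntermediateField.exists_adjoin_simple_eq_adjoin_pair {F E : Type*} [Field F]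
    [Infinite F] [Field E] [Algebra F E] (q n : ℕ) [ExpChar F q] {x y : E}
    (hx : IsSeparable F x) (hy : y ^ q ^ n ∈ F⟮x⟯) : ∃ γ : E, F⟮γ⟯ = F⟮x, y⟯ := by
  have : ExpChar E q := expChar_of_injective_algebraMap (algebraMap F E).injective q
  have : FiniteDimensional F F⟮x⟯ := adjoin.finiteDimensional hx.isIntegral
  have : Algebra.IsSeparable F F⟮x⟯ := (isSeparable_adjoin_simple_iff_isSeparable F E).mpr hx
  have : Finite (IntermediateField F F⟮x⟯) :=
    Field.finite_intermediateField_of_exists_primitive_element F F⟮x⟯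
      (Field.exists_primitive_element F F⟮x⟯)
  have hmem (c : F) : (y + c • x) ^ q ^ n ∈ F⟮x⟯ := by
    rw [add_pow_expChar_pow, smul_pow]
    exact add_mem hy (smul_mem _ (pow_mem (mem_adjoin_simple_self F x) _))
  obtain ⟨c, d, hcd, hF⟩ := Finite.exists_ne_map_eq_of_infinite
    fun c : F ↦ F⟮(⟨_, hmem c⟩ : F⟮x⟯)⟯
  replace hF : F⟮(y + c • x) ^ q ^ n⟯ = F⟮(y + d • x) ^ q ^ n⟯ := by
    simpa only [lift_adjoin_simple] using congrArg lift hF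
  set K := F⟮(y + c • x) ^ q ^ n⟯
  have hxK : x ∈ K := by
    have hdiff :
        (y + c • x) ^ q ^ n - (y + d • x) ^ q ^ n = (c ^ q ^ n - d ^ q ^ n) • x ^ q ^ n := by
      rw [add_pow_expChar_pow, add_pow_expChar_pow, smul_pow, smul_pow, sub_smul]
      abel
    have hdiffK : (c ^ q ^ n - d ^ q ^ n) • x ^ q ^ n ∈ K := hdiff ▸ sub_mem
      (mem_adjoin_simple_self F _) (hF ▸ mem_adjoin_simple_self F ((y + d • x) ^ q ^ n))
    have hne : c ^ q ^ n - d ^ q ^ n ≠ 0 :=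
      sub_ne_zero.mpr fun h ↦ hcd (iterateFrobenius_inj F q n h)
    refine K.mem_of_isSeparable_of_pow_mem q n hx ?_
    simpa [smul_smul, inv_mul_cancel₀ hne] using K.smul_mem (x := (c ^ q ^ n - d ^ q ^ n)⁻¹)
      hdiffK
  have hγ : K ≤ F⟮y + c • x⟯ :=
    adjoin_simple_le_iff.mpr (pow_mem (mem_adjoin_simple_self F _) _)
  refine ⟨y + c • x, le_antisymm ?_ ?_⟩
  · rw [adjoin_simple_le_iff]
    exact add_mem (subset_adjoin F _ (by simp)) (smul_mem _ (subset_adjoin F _ (by simp)))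
  · rw [adjoin_le_iff, Set.insert_subset_iff, Set.singleton_subset_iff]
    refine ⟨hγ hxK, ?_⟩
    simpa using sub_mem (mem_adjoin_simple_self F (y + c • x)) (smul_mem _ (hγ hxK) (x := c))

theorem rank_kaehlerDifferential_le_one_of_adjoin_simple_eq_top {K L : Type*} [Field K]
    [Field L] [Algebra K L] {x : L} (hx : IsIntegral K x) (htop : K⟮x⟯ = ⊤) :
    Module.rank L Ω[L⁄K] ≤ 1 := by
  have halg : Algebra.adjoin K {x} = ⊤ := by
    rw [← adjoin_simple_toSubalgebra_of_isAlgebraic hx.isAlgebraic, htop, top_toSubalgebra]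
  rw [← rank_top, ← span_D_eq_top_of_adjoin_singleton_eq_top halg]
  exact (rank_span_le _).trans (by simp)

theorem exists_adjoin_simple_eq_top_of_isPurelyInseparable {K L : Type*} [Field K] [Field L]
    [Algebra K L] [FiniteDimensional K L] [IsPurelyInseparable K L]
    (h : Module.rank L Ω[L⁄K] ≤ 1) : ∃ y : L, K⟮y⟯ = ⊤ := by
  obtain ⟨_, ⟨y, rfl⟩, hy⟩ := exists_span_singleton_eq_top_of_rank_le_one
    (span_range_derivation K L) (Set.range_nonempty _) h
  have : Algebra.FormallyUnramified K⟮y⟯ L := ⟨subsingleton_of_span_D_eq_top hy⟩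
  have : Algebra.IsSeparable K⟮y⟯ L := (Algebra.FormallyUnramified.iff_isSeparable _ _).mp this
  refine ⟨y, eq_top_iff.mpr fun z _ ↦ ?_⟩
  obtain ⟨w, rfl⟩ := IsPurelyInseparable.surjective_algebraMap_of_isSeparable K⟮y⟯ L z
  exact w.2

theorem exists_adjoin_simple_eq_top_of_rank_kaehlerDifferential_le_one {K L : Type*} [Field K]
    [Field L] [Algebra K L] [FiniteDimensional K L] (h : Module.rank L Ω[L⁄K] ≤ 1) :
    ∃ x : L, K⟮x⟯ = ⊤ := by
  rcases finite_or_infinite K with hK | hK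
  · exact Field.exists_primitive_element_of_finite_bot K L
  set S := separableClosure K L
  obtain ⟨y, hy⟩ : ∃ y : L, S⟮y⟯ = ⊤ := exists_adjoin_simple_eq_top_of_isPurelyInseparable
    ((LinearMap.rank_le_of_surjective _ (map_surjective K S L)).trans h)
  obtain ⟨x, hx⟩ := Field.exists_primitive_element K S
  have hSx : K⟮(x : L)⟯ = S := by rw [← lift_adjoin_simple, hx, lift_top]
  obtain ⟨q, _⟩ := ExpChar.exists K
  obtain ⟨n, z, hz⟩ := IsPurelyInseparable.pow_mem S q y
  have hyx : y ^ q ^ n ∈ K⟮(x : L)⟯ := by rw [hSx, ← hz]; exact z.2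
  obtain ⟨γ, hγ⟩ := exists_adjoin_simple_eq_adjoin_pair q n (mem_separableClosure_iff.mp x.2) hyx
  refine ⟨γ, hγ.trans ?_⟩
  have hsup := restrictScalars_adjoin_eq_sup (K := S) (S := {y})
  rw [hy, restrictScalars_top, ← hSx] at hsup
  rw [show ({(x : L), y} : Set L) = {(x : L)} ∪ {y} from rfl, adjoin_union, hsup]

/-- A finite field extension `l/k` is simple if and only if the module of
Kähler differentials `Ω¹_{l/k}` has dimension at most `1` as an `l`-vector space. -/
theorem finite_extension_simple_iff_rank_kaehlerDifferential_le_one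
    (k l : Type) [Field k] [Field l] [Algebra k l] [FiniteDimensional k l] :
    (∃ x : l, IntermediateField.adjoin k {x} = ⊤) ↔
      Module.rank l (Ω[l⁄k]) ≤ 1 :=
  ⟨fun ⟨x, hx⟩ ↦ rank_kaehlerDifferential_le_one_of_adjoin_simple_eq_top (.of_finite k x) hx,
    exists_adjoin_simple_eq_top_of_rank_kaehlerDifferential_le_one⟩
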